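/- arXiv:2507.06342 — 2 statements merged into one kernel-verified Lean document; each statement's English description precedes it below -/
import Mathlib

section
/- Fix ρ₀ ∈ ℝ. For every differentiable curve γ = (x, y) : ℝ → ℝ² with y(t) > 0 for all t, satisfying the SIS system x'(t) = ρ₀·x(t) − x(t)² − 1/y(t)² and y'(t) = −ρ₀·y(t) + 2·x(t)·y(t) for all t, the function t ↦ x(t)·y(t)·(ρ₀ − x(t)) + 1/y(t) is constant. In other words, the SIS system ẋ = xρ₀ − x² − 1/y², ẏ = −yρ₀ + 2xy is Hamiltonian with Hamiltonian function H(x,y) = xy(ρ₀ − x) + 1/y, which is a first integral of the system. -/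
/-!
Writing `H(x, y) = xy(ρ₀ - x) + 1/y`, the system reads `ẋ = ∂H/∂y`, `ẏ = -∂H/∂x` on `y ≠ 0`.
By the chain rule `d/dt H(x, y) = ∂H/∂x · ẋ + ∂H/∂y · ẏ = 0` along any solution, so `H` is
constant on it.
-/

open ContinuousLinearMap

theorem HasFDerivAt.hasDerivAt_comp_eq_zero_of_hamiltonian {H : ℝ × ℝ → ℝ} {γ : ℝ → ℝ × ℝ}
    {t Hx Hy : ℝ} (hH : HasFDerivAt H (Hx • fst ℝ ℝ ℝ + Hy • snd ℝ ℝ ℝ) (γ t))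
    (hγ : HasDerivAt γ (Hy, -Hx) t) : HasDerivAt (H ∘ γ) 0 t := by
  have h := hH.comp_hasDerivAt t hγ
  simp only [add_apply, smul_apply, coe_fst', coe_snd', smul_eq_mul] at h
  rwa [mul_neg, mul_comm, add_neg_cancel] at h

noncomputable def sisHamiltonian (ρ₀ : ℝ) (p : ℝ × ℝ) : ℝ := p.1 * p.2 * (ρ₀ - p.1) + 1 / p.2

theorem hasFDerivAt_sisHamiltonian (ρ₀ : ℝ) {p : ℝ × ℝ} (hp : p.2 ≠ 0) :
    HasFDerivAt (sisHamiltonian ρ₀)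
      ((p.2 * ρ₀ - 2 * p.1 * p.2) • fst ℝ ℝ ℝ + (p.1 * ρ₀ - p.1 ^ 2 - 1 / p.2 ^ 2) • snd ℝ ℝ ℝ)
      p := by
  have hfst := hasFDerivAt_fst (𝕜 := ℝ) (p := p)
  have hsnd := hasFDerivAt_snd (𝕜 := ℝ) (p := p)
  have h := ((hfst.fun_mul hsnd).fun_mul ((hasFDerivAt_const ρ₀ p).fun_sub hfst)).fun_add
    ((hasFDerivAt_inv hp).comp p hsnd)
  unfold sisHamiltonian
  simp only [one_div]
  refine h.congr_fderiv ?_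
  ext <;> simp <;> field_simp <;> ring

/-- The SIS system `ẋ = xρ₀ - x² - 1/y²`, `ẏ = -yρ₀ + 2xy` is Hamiltonian with Hamiltonian
`H(x,y) = xy(ρ₀ - x) + 1/y`, which is a first integral of the system. -/
theorem sis_first_integral (ρ₀ : ℝ) (x y : ℝ → ℝ) (hypos : ∀ t : ℝ, 0 < y t)
    (hx : ∀ t : ℝ, HasDerivAt x (x t * ρ₀ - (x t) ^ 2 - 1 / (y t) ^ 2) t)
    (hy : ∀ t : ℝ, HasDerivAt y (-(y t * ρ₀) + 2 * x t * y t) t) :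
    ∀ s t : ℝ, x s * y s * (ρ₀ - x s) + 1 / y s = x t * y t * (ρ₀ - x t) + 1 / y t := by
  have hH : ∀ t, HasDerivAt (sisHamiltonian ρ₀ ∘ fun t => (x t, y t)) 0 t := fun t =>
    (hasFDerivAt_sisHamiltonian ρ₀ (hypos t).ne').hasDerivAt_comp_eq_zero_of_hamiltonian
      (by convert (hx t).prodMk (hy t) using 2; ring)
  exact is_const_of_deriv_eq_zero (fun t => (hH t).differentiableAt) (fun t => (hH t).deriv)
end

section
/- Fix an integer i ≥ 1. The family of functions ℝ² → ℝ consisting of the constant function 1, the monomial functions (x,y) ↦ x^h y^k for all nonnegative integers h, k with 1 ≤ h + k ≤ i, and the four trigonometric functions (x,y) ↦ cos(x), (x,y) ↦ cos(y), (x,y) ↦ sin(x), (x,y) ↦ sin(y), is linearly independent over ℝ in the real vector space of functions from ℝ² to ℝ. -/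
/-!
The five functions `1, cos x, cos y, sin x, sin y` are `2π`-periodic in each variable, so the
linear map `g ↦ (p ↦ g p - g 0)` on the lattice `(2πℤ)²` kills them. On a nonconstant monomial
this map is plain restriction to the lattice, and a polynomial vanishing on a product of infinite
sets is zero, so the images of the monomials stay independent. Hence the spans of the monomials
and of the periodic functions meet only in `0`; the periodic functions themselves are separated
by evaluation at five points.
-/

open Function Set MvPolynomial Real

theorem LinearIndependent.sum_elim_of_map_eq_zero {ι κ R M M' : Type*} [Ring R] [AddCommGroup M]
    [AddCommGroup M'] [Module R M] [Module R M'] {v : ι → M} {w : κ → M} (f : M →ₗ[R] M')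
    (hv : LinearIndependent R (f ∘ v)) (hw : LinearIndependent R w) (hfw : ∀ k, f (w k) = 0) :
    LinearIndependent R (Sum.elim v w) :=
  (hv.of_comp f).sum_type hw <| (Submodule.range_ker_disjoint hv).mono_right <|
    Submodule.span_le.2 <| range_subset_iff.2 hfw

theorem MvPolynomial.linearIndependent_eval_monomial_on_pi {R σ : Type*} [CommRing R] [IsDomain R]
    (s : σ → Set R) (hs : ∀ i, (s i).Infinite) :
    LinearIndependent R fun (d : σ →₀ ℕ) (x : pi univ s) => eval x.1 (monomial d (1 : R)) := by
  let E : MvPolynomial σ R →ₗ[R] pi univ s → R := LinearMap.pi fun x => (aeval x.1).toLinearMap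
  have hE : LinearMap.ker E = ⊥ := LinearMap.ker_eq_bot'.2 fun p hp =>
    funext_set s hs fun x hx => by simpa [E] using congrFun hp ⟨x, hx⟩
  exact (basisMonomials σ R).linearIndependent.map' E hE

theorem linearIndependent_pow_mul_pow_on_pi {R : Type*} [CommRing R] [IsDomain R]
    (s : Fin 2 → Set R) (hs : ∀ i, (s i).Infinite) :
    LinearIndependent R fun (e : ℕ × ℕ) (x : pi univ s) => x.1 0 ^ e.1 * x.1 1 ^ e.2 := by
  have hinj : Injective fun e : ℕ × ℕ => Finsupp.single (0 : Fin 2) e.1 + Finsupp.single 1 e.2 :=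
    fun e e' h => Prod.ext (by simpa using DFunLike.congr_fun h 0)
      (by simpa using DFunLike.congr_fun h 1)
  convert (linearIndependent_eval_monomial_on_pi s hs).comp _ hinj using 1
  ext e x
  change _ = eval x.1 (monomial (Finsupp.single 0 e.1 + Finsupp.single 1 e.2) 1)
  rw [← mul_one (1 : R), ← monomial_mul, ← X_pow_eq_monomial, ← X_pow_eq_monomial]
  simp

/-- A box in `Fin 2 → ℝ` rather than a subset of `ℝ × ℝ`, so that `MvPolynomial.funext_set`
applies. -/
abbrev periodLattice : Set (Fin 2 → ℝ) := pi univ fun _ => range fun n : ℤ => n • (2 * π)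

theorem infinite_range_zsmul_two_pi : (range fun n : ℤ => n • (2 * π)).Infinite :=
  infinite_range_of_injective fun m n h => by simpa [pi_ne_zero] using h

def latticeIncrement : (ℝ × ℝ → ℝ) →ₗ[ℝ] periodLattice → ℝ where
  toFun g x := g (x.1 0, x.1 1) - g 0
  map_add' g h := by ext; simp; ring
  map_smul' c g := by ext; simp; ring

theorem latticeIncrement_eq_zero {g : ℝ × ℝ → ℝ} (h₁ : Periodic g (2 * π, 0))
    (h₂ : Periodic g (0, 2 * π)) : latticeIncrement g = 0 := by
  ext ⟨x, hx⟩
  obtain ⟨⟨m, hm⟩, ⟨n, hn⟩⟩ := And.intro (hx 0 trivial) (hx 1 trivial)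
  have : (x 0, x 1) = n • ((0 : ℝ), 2 * π) + m • (2 * π, (0 : ℝ)) := by
    simp [← hm, ← hn]
  simp only [latticeIncrement, LinearMap.coe_mk, AddHom.coe_mk, Pi.zero_apply, this,
    h₁.zsmul m _, ← (h₂.zsmul n).eq, sub_self]

theorem linearIndependent_one_cos_sin :
    LinearIndependent ℝ (Sum.elim (fun (_ : Unit) (_ : ℝ × ℝ) => (1 : ℝ))
      ![fun p : ℝ × ℝ => cos p.1, fun p : ℝ × ℝ => cos p.2,
        fun p : ℝ × ℝ => sin p.1, fun p : ℝ × ℝ => sin p.2]) := by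
  rw [Fintype.linearIndependent_iff]
  intro g hg
  have h (x y : ℝ) : g (.inl ()) + g (.inr 0) * cos x + g (.inr 1) * cos y
      + g (.inr 2) * sin x + g (.inr 3) * sin y = 0 := by
    simpa [Fintype.sum_sum_type, Fin.sum_univ_four, add_assoc] using congrFun hg (x, y)
  have h₀ := h 0 0
  have h₁ := h π 0
  have h₂ := h 0 π
  have h₃ := h (π / 2) 0
  have h₄ := h 0 (π / 2)
  simp only [cos_zero, sin_zero, cos_pi, sin_pi, cos_pi_div_two, sin_pi_div_two] at h₀ h₁ h₂ h₃ h₄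
  rintro (⟨⟩ | j)
  · linarith
  · fin_cases j <;> simp <;> linarith

theorem monomials_trig_linearIndependent_general (i : ℕ) :
    LinearIndependent ℝ
      (fun j : Unit ⊕ {p : ℕ × ℕ // 1 ≤ p.1 + p.2 ∧ p.1 + p.2 ≤ i} ⊕ Fin 4 =>
        Sum.elim (fun _ : Unit => fun _ : ℝ × ℝ => (1 : ℝ))
          (Sum.elim
            (fun m : {p : ℕ × ℕ // 1 ≤ p.1 + p.2 ∧ p.1 + p.2 ≤ i} =>
              fun p : ℝ × ℝ => p.1 ^ m.val.1 * p.2 ^ m.val.2)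
            ![fun p : ℝ × ℝ => Real.cos p.1, fun p : ℝ × ℝ => Real.cos p.2,
              fun p : ℝ × ℝ => Real.sin p.1, fun p : ℝ × ℝ => Real.sin p.2]) j) := by
  have hmono : LinearIndependent ℝ (latticeIncrement ∘
      fun (m : {p : ℕ × ℕ // 1 ≤ p.1 + p.2 ∧ p.1 + p.2 ≤ i}) (p : ℝ × ℝ) =>
        p.1 ^ m.val.1 * p.2 ^ m.val.2) := by
    refine (congrArg (fun v => LinearIndependent ℝ v) (funext₂ fun m x => ?_)).mpr
      ((linearIndependent_pow_mul_pow_on_pi _ fun _ => infinite_range_zsmul_two_pi).comp _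
        Subtype.val_injective)
    have hm : m.val.1 ≠ 0 ∨ m.val.2 ≠ 0 := by omega
    simp [latticeIncrement, hm]
  have hreordered := hmono.sum_elim_of_map_eq_zero latticeIncrement linearIndependent_one_cos_sin
    (by rintro (⟨⟩ | j) <;> [skip; fin_cases j] <;>
      exact latticeIncrement_eq_zero (fun p => by simp) (fun p => by simp))
  let e : Unit ⊕ {p : ℕ × ℕ // 1 ≤ p.1 + p.2 ∧ p.1 + p.2 ≤ i} ⊕ Fin 4 ≃ _ :=
    (Equiv.sumAssoc _ _ _).symm.trans
      (((Equiv.sumComm _ _).sumCongr (Equiv.refl _)).trans (Equiv.sumAssoc _ _ _))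
  exact (linearIndependent_equiv' e (by ext (⟨⟩ | _ | _) <;> rfl)).2 hreordered

/-- The constant function `1`, the monomials `x^h y^k` for `1 ≤ h + k ≤ i`, and the four
trigonometric functions `cos x`, `cos y`, `sin x`, `sin y` form a linearly independent
family in the real vector space of functions `ℝ² → ℝ`. -/
theorem monomials_trig_linearIndependent (i : ℕ) (hi : 1 ≤ i) :
    LinearIndependent ℝ
      (fun j : Unit ⊕ {p : ℕ × ℕ // 1 ≤ p.1 + p.2 ∧ p.1 + p.2 ≤ i} ⊕ Fin 4 =>
        Sum.elim (fun _ : Unit => fun _ : ℝ × ℝ => (1 : ℝ))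
          (Sum.elim
            (fun m : {p : ℕ × ℕ // 1 ≤ p.1 + p.2 ∧ p.1 + p.2 ≤ i} =>
              fun p : ℝ × ℝ => p.1 ^ m.val.1 * p.2 ^ m.val.2)
            ![fun p : ℝ × ℝ => Real.cos p.1, fun p : ℝ × ℝ => Real.cos p.2,
              fun p : ℝ × ℝ => Real.sin p.1, fun p : ℝ × ℝ => Real.sin p.2]) j) :=
  monomials_trig_linearIndependent_general i
end
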